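/- For any s, s* ∈ ℝⁿ with w = s - s*, the function M(s) = f0 + gᵀs + (1/2)sᵀHs + (β/6)‖s‖³ + (σ/4)‖s‖⁴ satisfies the expansion M(s) - M(s*) = (B(s*)s* + g)ᵀw + (1/2)wᵀB(s*)w + F₂, where B(s*) = H + (β/2)‖s*‖ I + σ‖s*‖² I and F₂ = (1/2)(‖s‖ - ‖s*‖)² [ (β/6)(‖s*‖ + 2‖s‖) + (σ/2)(‖s*‖ + ‖s‖)² ]. -/

import Mathlib

open Matrix Polynomial

noncomputable def enorm' {n : ℕ} (s : Fin n → ℝ) : ℝ := Real.sqrt (s ⬝ᵥ s)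

noncomputable def Mfun {n : ℕ} (f0 : ℝ) (g : Fin n → ℝ)
    (H : Matrix (Fin n) (Fin n) ℝ) (β σ : ℝ) (s : Fin n → ℝ) : ℝ :=
  f0 + g ⬝ᵥ s + (1/2) * (s ⬝ᵥ (H *ᵥ s)) + (β/6) * enorm' s ^ 3 + (σ/4) * enorm' s ^ 4

noncomputable def Bmat {n : ℕ} (H : Matrix (Fin n) (Fin n) ℝ) (β σ : ℝ)
    (s : Fin n → ℝ) : Matrix (Fin n) (Fin n) ℝ :=
  H + ((β/2) * enorm' s) • (1 : Matrix (Fin n) (Fin n) ℝ)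
    + (σ * enorm' s ^ 2) • (1 : Matrix (Fin n) (Fin n) ℝ)

/-! The quadratic part `gᵀs + ½ sᵀHs` is expanded exactly by its second-order Taylor formula at
`s*`, and the same holds for `B(s*)`, which differs from `H` by `c I` with `c = (β/2)‖s*‖ + σ‖s*‖²`.
Subtracting the two expansions leaves a scalar identity in `a = ‖s‖` and `b = ‖s*‖`, namely
`(β/6)(a³ - b³) + (σ/4)(a⁴ - b⁴) = (c/2)(a² - b²) + F₂`, which is polynomial. -/

theorem Matrix.IsSymm.dotProduct_mulVec_sub {ι R : Type*} [Fintype ι] [CommRing R]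
    {A : Matrix ι ι R} (hA : A.IsSymm) (s t : ι → R) :
    s ⬝ᵥ (A *ᵥ s) - t ⬝ᵥ (A *ᵥ t) = 2 * ((A *ᵥ t) ⬝ᵥ (s - t)) + (s - t) ⬝ᵥ (A *ᵥ (s - t)) := by
  obtain ⟨w, rfl⟩ : ∃ w, s = t + w := ⟨s - t, by abel⟩
  have hcross : t ⬝ᵥ (A *ᵥ w) = (A *ᵥ t) ⬝ᵥ w := by
    rw [dotProduct_mulVec, ← mulVec_transpose, hA.eq]
  simp only [add_sub_cancel_left, mulVec_add, add_dotProduct, dotProduct_add, hcross,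
    dotProduct_comm w (A *ᵥ t)]
  ring

theorem enorm'_sq {n : ℕ} (s : Fin n → ℝ) : enorm' s ^ 2 = s ⬝ᵥ s :=
  Real.sq_sqrt (Finset.sum_nonneg fun i _ => mul_self_nonneg (s i))

theorem Bmat_isSymm {n : ℕ} {H : Matrix (Fin n) (Fin n) ℝ} (hH : H.IsSymm) (β σ : ℝ)
    (t : Fin n → ℝ) : (Bmat H β σ t).IsSymm :=
  (hH.add (isSymm_one.smul _)).add (isSymm_one.smul _)

theorem dotProduct_Bmat_mulVec {n : ℕ} (H : Matrix (Fin n) (Fin n) ℝ) (β σ : ℝ)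
    (t x : Fin n → ℝ) :
    x ⬝ᵥ (Bmat H β σ t *ᵥ x) =
      x ⬝ᵥ (H *ᵥ x) + ((β/2) * enorm' t + σ * enorm' t ^ 2) * enorm' x ^ 2 := by
  simp only [Bmat, add_mulVec, smul_mulVec, one_mulVec, dotProduct_add, dotProduct_smul,
    smul_eq_mul, enorm'_sq]
  ring

theorem cubic_quartic_sub_eq (β σ a b : ℝ) :
    (β/6) * a ^ 3 + (σ/4) * a ^ 4 - ((β/6) * b ^ 3 + (σ/4) * b ^ 4) =
      (1/2) * ((β/2) * b + σ * b ^ 2) * (a ^ 2 - b ^ 2)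
        + (1/2) * (a - b) ^ 2 * ((β/6) * (b + 2 * a) + (σ/2) * (b + a) ^ 2) := by
  ring

theorem stmt3 {n : ℕ} (f0 : ℝ) (g : Fin n → ℝ) (H : Matrix (Fin n) (Fin n) ℝ)
    (hH : H.IsSymm) (β σ : ℝ) (s sstar : Fin n → ℝ) :
    Mfun f0 g H β σ s - Mfun f0 g H β σ sstar =
      ((Bmat H β σ sstar) *ᵥ sstar + g) ⬝ᵥ (s - sstar)
        + (1/2) * ((s - sstar) ⬝ᵥ ((Bmat H β σ sstar) *ᵥ (s - sstar)))
        + (1/2) * (enorm' s - enorm' sstar)^2 *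
            ((β/6) * (enorm' sstar + 2 * enorm' s)
              + (σ/2) * (enorm' sstar + enorm' s)^2) := by
  have hB := (Bmat_isSymm hH β σ sstar).dotProduct_mulVec_sub s sstar
  rw [dotProduct_Bmat_mulVec, dotProduct_Bmat_mulVec] at hB
  rw [add_dotProduct, dotProduct_sub g]
  unfold Mfun
  linear_combination (1/2) * hB + cubic_quartic_sub_eq β σ (enorm' s) (enorm' sstar)
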